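/- Let m, n ≥ 1 and let c : Fin m × Fin n → ℝ be an arbitrary cost function. Then there exists a coupling γ of the uniform measures (a matrix γ : Fin m → Fin n → ℝ with γ(i,j) ≥ 0 for all i,j, ∑_j γ(i,j) = 1/m for every i, and ∑_i γ(i,j) = 1/n for every j) such that γ minimizes the Kantorovich cost ∑_{i,j} c(i,j) γ(i,j) among all such couplings and the total number of pairs (i,j) with γ(i,j) ≠ 0 is at most lcm(m,n) = m·n/gcd(m,n). -/

import Mathlib

/-!
With `L = lcm m n`, blow every source point up into `L / m` copies and every target point into
`L / n` copies, so that both sides have `L` points. A uniform coupling lifts to an `L × L` doubly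
stochastic matrix whose cost is `L` times its own, and by Birkhoff's theorem the (linear) cost is
minimised over doubly stochastic matrices at a permutation matrix. Pushing the optimal permutation
back down gives an optimal coupling which is the image of the uniform measure on `L` points, hence
is supported on at most `L` pairs.
-/
open Finset Matrix

theorem Matrix.exists_perm_sum_le_of_mem_doublyStochastic {K : Type*} [Fintype K] [DecidableEq K]
    (C : Matrix K K ℝ) :
    ∃ σ : Equiv.Perm K, ∀ M ∈ doublyStochastic ℝ K,
      ∑ k, C k (σ k) ≤ ∑ k, ∑ l, C k l * M k l := by
  let ℓ : Matrix K K ℝ →ₗ[ℝ] ℝ :=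
    { toFun M := ∑ k, ∑ l, C k l * M k l
      map_add' M N := by simp only [add_apply, mul_add, sum_add_distrib]
      map_smul' r M := by
        simp only [smul_apply, smul_eq_mul, mul_sum, mul_left_comm, RingHom.id_apply] }
  have hℓ_perm (τ : Equiv.Perm K) : ℓ (τ.permMatrix ℝ) = ∑ k, C k (τ k) := by
    simp [ℓ, PEquiv.toMatrix_apply]
  obtain ⟨σ, -, hσ⟩ := exists_min_image univ (fun τ : Equiv.Perm K => ℓ (τ.permMatrix ℝ))
    univ_nonempty
  refine ⟨σ, fun M hM => ?_⟩
  rw [← SetLike.mem_coe, doublyStochastic_eq_convexHull_permMatrix] at hM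
  obtain ⟨_, ⟨τ, rfl⟩, hτ⟩ :=
    (ℓ.concaveOn convex_univ).exists_le_of_mem_convexHull (Set.subset_univ _) hM
  calc ∑ k, C k (σ k) = ℓ (σ.permMatrix ℝ) := (hℓ_perm σ).symm
    _ ≤ ℓ (τ.permMatrix ℝ) := hσ τ (mem_univ τ)
    _ ≤ ℓ M := hτ

theorem Finset.card_filter_fst_eq {α κ : Type*} [Fintype α] [DecidableEq α] [Fintype κ] (i : α) :
    #{p : α × κ | p.1 = i} = Fintype.card κ := by
  rw [show ({p : α × κ | p.1 = i} : Finset _) = {i} ×ˢ univ by ext ⟨x, y⟩; simp [eq_comm]]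
  simp

section FiberCount

variable {ι κ : Type*} [Fintype ι] [Fintype κ] [DecidableEq κ]

theorem Finset.sum_comp_eq_sum_card_fiber_nsmul {M : Type*} [AddCommMonoid M] (h : ι → κ)
    (w : κ → M) : ∑ k, w (h k) = ∑ p, #{k | h k = p} • w p := by
  simp_rw [← sum_fiberwise' univ h w, sum_const]

theorem Finset.sum_comp_eq_nsmul_sum_of_card_fiber {M : Type*} [AddCommMonoid M] {h : ι → κ}
    {a : ℕ} (ha : ∀ p, #{k | h k = p} = a) (w : κ → M) : ∑ k, w (h k) = a • ∑ p, w p := by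
  simp_rw [sum_comp_eq_sum_card_fiber_nsmul, ha, smul_sum]

theorem Fintype.card_eq_mul_of_card_fiber {h : ι → κ} {a : ℕ} (ha : ∀ p, #{k | h k = p} = a) :
    Fintype.card ι = a * Fintype.card κ := by
  simpa [mul_comm] using sum_comp_eq_nsmul_sum_of_card_fiber ha (fun _ => (1 : ℕ))

theorem Finset.sum_card_fiber_prod_right {α β : Type*} [DecidableEq α] [Fintype β] [DecidableEq β]
    (h : ι → α × β) (i : α) : ∑ j, #{k | h k = (i, j)} = #{k | (h k).1 = i} := by
  rw [card_eq_sum_card_fiberwise (f := fun k => (h k).2) (t := univ) (by simp)]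
  simp [filter_filter, Prod.ext_iff]

theorem Finset.sum_card_fiber_prod_left {α β : Type*} [Fintype α] [DecidableEq α] [DecidableEq β]
    (h : ι → α × β) (j : β) : ∑ i, #{k | h k = (i, j)} = #{k | (h k).2 = j} := by
  rw [card_eq_sum_card_fiberwise (f := fun k => (h k).1) (t := univ) (by simp)]
  simp [filter_filter, Prod.ext_iff, and_comm]

end FiberCount

section Transport

variable {α β ι : Type*} [Fintype α] [Fintype β] [Fintype ι]

def transportCost (c : α × β → ℝ) (γ : α → β → ℝ) : ℝ := ∑ i, ∑ j, c (i, j) * γ i j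

def IsUniformCoupling (γ : α → β → ℝ) : Prop :=
  (∀ i j, 0 ≤ γ i j) ∧ (∀ i, ∑ j, γ i j = 1 / Fintype.card α) ∧
    ∀ j, ∑ i, γ i j = 1 / Fintype.card β

variable [DecidableEq α] [DecidableEq β]

noncomputable def empiricalPlan (h : ι → α × β) (i : α) (j : β) : ℝ :=
  #{k | h k = (i, j)} / Fintype.card ι

theorem isUniformCoupling_empiricalPlan [Nonempty ι] {h : ι → α × β} {a b : ℕ}
    (ha : ∀ i, #{k | (h k).1 = i} = a) (hb : ∀ j, #{k | (h k).2 = j} = b) :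
    IsUniformCoupling (empiricalPlan h) := by
  have hmarginal {x y : ℕ} (hxy : Fintype.card ι = x * y) : (x : ℝ) / Fintype.card ι = 1 / y := by
    have hx : x ≠ 0 := left_ne_zero_of_mul (hxy ▸ Fintype.card_ne_zero)
    rw [hxy, Nat.cast_mul, div_mul_cancel_left₀ (Nat.cast_ne_zero.2 hx), one_div]
  refine ⟨fun i j => by unfold empiricalPlan; positivity, fun i => ?_, fun j => ?_⟩
  · simp only [empiricalPlan, ← sum_div]
    rw [← Nat.cast_sum, sum_card_fiber_prod_right, ha,
      hmarginal (Fintype.card_eq_mul_of_card_fiber ha)]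
  · simp only [empiricalPlan, ← sum_div]
    rw [← Nat.cast_sum, sum_card_fiber_prod_left, hb,
      hmarginal (Fintype.card_eq_mul_of_card_fiber hb)]

theorem transportCost_empiricalPlan (c : α × β → ℝ) (h : ι → α × β) :
    transportCost c (empiricalPlan h) = (∑ k, c (h k)) / Fintype.card ι := by
  rw [sum_comp_eq_sum_card_fiber_nsmul h c, Fintype.sum_prod_type, sum_div]
  refine sum_congr rfl fun i _ => ?_
  rw [sum_div]
  refine sum_congr rfl fun j _ => ?_
  rw [empiricalPlan, nsmul_eq_mul]
  ring

theorem card_support_empiricalPlan_le (h : ι → α × β) :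
    #{p : α × β | empiricalPlan h p.1 p.2 ≠ 0} ≤ Fintype.card ι := by
  calc #{p : α × β | empiricalPlan h p.1 p.2 ≠ 0} ≤ #(univ.image h) := by
        refine card_le_card fun p hp => ?_
        obtain ⟨k, hk⟩ : ∃ k, h k = p := by
          by_contra! hp'
          simp [empiricalPlan, hp'] at hp
        exact mem_image.2 ⟨k, mem_univ k, hk⟩
    _ ≤ Fintype.card ι := card_image_le

/-- The factor `|α| |β| / |ι|` equals `|α| / b = |β| / a` when the fibres of `f` and `g` have
sizes `a` and `b`, which is what makes the lift of a uniform coupling doubly stochastic. -/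
noncomputable def liftPlan (f : ι → α) (g : ι → β) (γ : α → β → ℝ) : Matrix ι ι ℝ :=
  of fun k l => (Fintype.card α * Fintype.card β / Fintype.card ι : ℝ) * γ (f k) (g l)

variable {f : ι → α} {g : ι → β} {a b : ℕ}

theorem liftPlan_mem_doublyStochastic [DecidableEq ι] (hf : ∀ i, #{k | f k = i} = a)
    (hg : ∀ j, #{l | g l = j} = b) {γ : α → β → ℝ} (hγ : IsUniformCoupling γ) :
    liftPlan f g γ ∈ doublyStochastic ℝ ι := by
  have hαι : (Fintype.card ι : ℝ) = a * Fintype.card α := by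
    exact_mod_cast Fintype.card_eq_mul_of_card_fiber hf
  have hβι : (Fintype.card ι : ℝ) = b * Fintype.card β := by
    exact_mod_cast Fintype.card_eq_mul_of_card_fiber hg
  rw [mem_doublyStochastic_iff_sum]
  refine ⟨fun k l => mul_nonneg (by positivity) (hγ.1 _ _), fun k => ?_, fun l => ?_⟩
  · have : Nonempty ι := ⟨k⟩
    have : Nonempty α := ⟨f k⟩
    simp only [liftPlan, of_apply, ← mul_sum]
    rw [sum_comp_eq_nsmul_sum_of_card_fiber hg (γ (f k)), hγ.2.1, nsmul_eq_mul]
    field_simp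
    linear_combination hβι.symm
  · have : Nonempty ι := ⟨l⟩
    have : Nonempty β := ⟨g l⟩
    simp only [liftPlan, of_apply, ← mul_sum]
    rw [sum_comp_eq_nsmul_sum_of_card_fiber hf (fun i => γ i (g l)), hγ.2.2, nsmul_eq_mul]
    field_simp
    linear_combination hαι.symm

theorem sum_mul_liftPlan (hf : ∀ i, #{k | f k = i} = a) (hg : ∀ j, #{l | g l = j} = b)
    (c : α × β → ℝ) (γ : α → β → ℝ) :
    ∑ k, ∑ l, c (f k, g l) * liftPlan f g γ k l = Fintype.card ι * transportCost c γ := by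
  have hαι : (Fintype.card ι : ℝ) = a * Fintype.card α := by
    exact_mod_cast Fintype.card_eq_mul_of_card_fiber hf
  have hβι : (Fintype.card ι : ℝ) = b * Fintype.card β := by
    exact_mod_cast Fintype.card_eq_mul_of_card_fiber hg
  have hsum : ∑ k, ∑ l, c (f k, g l) * γ (f k) (g l) = a * b * transportCost c γ := by
    calc ∑ k, ∑ l, c (f k, g l) * γ (f k) (g l)
        = ∑ k, b • ∑ j, c (f k, j) * γ (f k) j := sum_congr rfl fun k _ =>
          sum_comp_eq_nsmul_sum_of_card_fiber hg (fun j => c (f k, j) * γ (f k) j)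
      _ = a • ∑ i, b • ∑ j, c (i, j) * γ i j :=
          sum_comp_eq_nsmul_sum_of_card_fiber hf (fun i => b • ∑ j, c (i, j) * γ i j)
      _ = a * b * transportCost c γ := by
          simp only [transportCost, nsmul_eq_mul, mul_sum, mul_assoc]
  have hscale : (Fintype.card α * Fintype.card β / Fintype.card ι : ℝ) * (a * b) =
      Fintype.card ι := by
    rcases eq_or_ne (Fintype.card ι : ℝ) 0 with h0 | h0
    · simp [h0]
    · field_simp
      linear_combination (-(Fintype.card ι : ℝ)) * hβι - (b * Fintype.card β : ℝ) * hαι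
  simp only [liftPlan, of_apply, mul_left_comm _ (Fintype.card α * Fintype.card β /
    Fintype.card ι : ℝ), ← mul_sum]
  rw [hsum, ← mul_assoc, hscale]

theorem exists_isMinOn_transportCost_card_support_le [Nonempty ι] [DecidableEq ι]
    (c : α × β → ℝ) (hf : ∀ i, #{k | f k = i} = a) (hg : ∀ j, #{l | g l = j} = b) :
    ∃ γ : α → β → ℝ, IsUniformCoupling γ ∧
      IsMinOn (transportCost c) {γ' | IsUniformCoupling γ'} γ ∧
      #{p : α × β | γ p.1 p.2 ≠ 0} ≤ Fintype.card ι := by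
  obtain ⟨σ, hσ⟩ := exists_perm_sum_le_of_mem_doublyStochastic (of fun k l => c (f k, g l))
  have hgσ (j : β) : #{k | g (σ k) = j} = b := (card_equiv σ (by simp)).trans (hg j)
  refine ⟨empiricalPlan fun k => (f k, g (σ k)), isUniformCoupling_empiricalPlan hf hgσ,
    isMinOn_iff.2 fun γ' hγ' => ?_, card_support_empiricalPlan_le _⟩
  rw [transportCost_empiricalPlan, div_le_iff₀ (by positivity), mul_comm,
    ← sum_mul_liftPlan hf hg]
  exact hσ _ (liftPlan_mem_doublyStochastic hf hg hγ')

end Transport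

/-- There is an optimal coupling of the uniform measures on `m` and `n` points
whose support has at most `lcm(m,n)` entries. -/
theorem kantorovich_sparse_support_solution
    (m n : ℕ) (hm : 1 ≤ m) (hn : 1 ≤ n) (c : Fin m × Fin n → ℝ) :
    ∃ γ : Fin m → Fin n → ℝ,
      (∀ i j, 0 ≤ γ i j) ∧
      (∀ i, ∑ j, γ i j = 1 / m) ∧
      (∀ j, ∑ i, γ i j = 1 / n) ∧
      (∀ γ' : Fin m → Fin n → ℝ,
        (∀ i j, 0 ≤ γ' i j) →
        (∀ i, ∑ j, γ' i j = 1 / m) →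
        (∀ j, ∑ i, γ' i j = 1 / n) →
        ∑ i, ∑ j, c (i, j) * γ i j ≤ ∑ i, ∑ j, c (i, j) * γ' i j) ∧
      (Finset.univ.filter fun p : Fin m × Fin n => γ p.1 p.2 ≠ 0).card ≤
        Nat.lcm m n := by
  set L := Nat.lcm m n
  have hmL : m * (L / m) = L := Nat.mul_div_cancel' (Nat.dvd_lcm_left m n)
  have hnL : n * (L / n) = L := Nat.mul_div_cancel' (Nat.dvd_lcm_right m n)
  have hL : L ≠ 0 := Nat.lcm_ne_zero (by omega) (by omega)
  have : NeZero m := ⟨by omega⟩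
  have : NeZero (L / m) := ⟨fun h => hL (by rw [← hmL, h, mul_zero])⟩
  let e : Fin m × Fin (L / m) ≃ Fin n × Fin (L / n) := Fintype.equivOfCardEq (by simp [hmL, hnL])
  obtain ⟨γ, ⟨hγ0, hγm, hγn⟩, hopt, hsupp⟩ :=
    exists_isMinOn_transportCost_card_support_le c (f := Prod.fst) (g := Prod.fst ∘ e)
      card_filter_fst_eq (fun j => (card_equiv e (by simp)).trans (card_filter_fst_eq j))
  refine ⟨γ, hγ0, by simpa using hγm, by simpa using hγn, fun γ' h0 hm' hn' => ?_, ?_⟩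
  · exact isMinOn_iff.1 hopt γ' ⟨h0, by simpa using hm', by simpa using hn'⟩
  · simpa [hmL] using hsupp
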